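/- Let x lie in the open unit disk of ℝ² and v ∈ ℝ², v ≠ 0, so v·x_b(x,v) < 0. Then the reflected velocity map v¹(x,v) := R_{x_b(x,v)}·v is differentiable at (x,v), with Jacobians ∇_x v¹ = −2·A_{v, x_b(x,v)} and ∇_v v¹ = R_{x_b(x,v)} + 2·t_b(x,v)·A_{v, x_b(x,v)}. -/

import Mathlib

noncomputable section

open Matrix Real Set

/-- The Euclidean plane ℝ². -/
abbrev E : Type := EuclideanSpace ℝ (Fin 2)

/-- Dot product on ℝ². -/
def dot (a b : E) : ℝ := a 0 * b 0 + a 1 * b 1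

/-- Build a vector of ℝ² from its components. -/
def toE (f : Fin 2 → ℝ) : E := (WithLp.equiv 2 (Fin 2 → ℝ)).symm f

/-- Tensor (outer) product a⊗b, (a⊗b)_{ij} = aᵢ bⱼ. -/
def outer (a b : E) : Matrix (Fin 2) (Fin 2) ℝ := Matrix.of fun i j => a i * b j

/-- Matrix acting on a column vector. -/
def mulV (M : Matrix (Fin 2) (Fin 2) ℝ) (v : E) : E := toE fun i => M i 0 * v 0 + M i 1 * v 1

/-- Row vector multiplied by a matrix on the right. -/
def vMulM (w : E) (M : Matrix (Fin 2) (Fin 2) ℝ) : E := toE fun j => w 0 * M 0 j + w 1 * M 1 j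

/-- Specular reflection matrix R_n = I - 2 n⊗n. -/
def Rmat (n : E) : Matrix (Fin 2) (Fin 2) ℝ := 1 - (2 : ℝ) • outer n n

/-- The matrix A_{v,n} = ((v·n) I + n⊗v)(I - (v⊗n)/(v·n)). -/
def Amat (v n : E) : Matrix (Fin 2) (Fin 2) ℝ :=
  (dot v n • (1 : Matrix (Fin 2) (Fin 2) ℝ) + outer n v) *
    (1 - (dot v n)⁻¹ • outer v n)

/-- Counterclockwise rotation by π/2. -/
def Qmat : Matrix (Fin 2) (Fin 2) ℝ := !![0, -1; 1, 0]

/-- Backward exit time from the closed unit disk. -/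
def tb (x v : E) : ℝ := sSup {s : ℝ | 0 ≤ s ∧ ‖x - s • v‖ ≤ 1}

/-- Backward exit point from the closed unit disk. -/
def xb (x v : E) : E := x - tb x v • v

/-- The i-th column of a 2×2 matrix, as a vector of ℝ². -/
def colE (M : Matrix (Fin 2) (Fin 2) ℝ) (i : Fin 2) : E := toE fun k => M k i

/-- A 2×2 matrix as a continuous linear map ℝ² → ℝ². -/
def toCLM (M : Matrix (Fin 2) (Fin 2) ℝ) : E →L[ℝ] E :=
  LinearMap.toContinuousLinearMap (Matrix.toEuclideanLin M)

/-
The backward exit time is the positive root of the quadratic `‖x - s • v‖ ^ 2 = 1`, so near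
`(x, v)` it is given by a smooth formula and `x_b` stays on the unit circle. Differentiating
`‖x_b‖ ^ 2 = 1` implicitly gives `d t_b = ⟪x_b, dx - t_b dv⟫ / ⟪v, x_b⟫`, hence
`d x_b = P (dx - t_b dv)` with `P = I - (v ⊗ x_b) / (v · x_b)`, the projection along `v` onto the
tangent line at `x_b`. The reflection `(n, w) ↦ w - 2 ⟪n, w⟫ n` has `n`-derivative
`-2 ((w · n) I + n ⊗ w)`, so by the chain rule the Jacobian of `v¹` is
`(dx, dv) ↦ R_{x_b} dv - 2 A_{v, x_b} (dx - t_b dv)`, since `A_{v, n} = ((v · n) I + n ⊗ v) P`.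
-/

open scoped RealInnerProductSpace
open ContinuousLinearMap Filter Topology

lemma dot_eq_inner (a b : E) : dot a b = ⟪a, b⟫ := by
  simp [dot, PiLp.inner_apply, Fin.sum_univ_two, mul_comm]

lemma toCLM_eq_toEuclideanCLM : toCLM = Matrix.toEuclideanCLM (𝕜 := ℝ) (n := Fin 2) := by
  ext M : 1
  rfl

lemma mulV_eq_toCLM (M : Matrix (Fin 2) (Fin 2) ℝ) (v : E) : mulV M v = toCLM M v := by
  ext i
  simp [mulV, toE, toCLM_eq_toEuclideanCLM, Matrix.mulVec, dotProduct, Fin.sum_univ_two]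

lemma toCLM_outer_apply (a b u : E) : toCLM (outer a b) u = ⟪b, u⟫ • a := by
  ext i
  simp [outer, toCLM_eq_toEuclideanCLM, Matrix.mulVec, dotProduct, Fin.sum_univ_two,
    PiLp.inner_apply]
  ring

lemma toCLM_Rmat_apply (n u : E) : toCLM (Rmat n) u = u - (2 * ⟪n, u⟫) • n := by
  rw [Rmat, toCLM_eq_toEuclideanCLM, map_sub, map_one, map_smul, ← toCLM_eq_toEuclideanCLM]
  simp [toCLM_outer_apply, mul_smul]

section Quadratic

variable {F : Type*} [NormedAddCommGroup F] [InnerProductSpace ℝ F]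

lemma norm_sub_smul_sq (x v : F) (s : ℝ) :
    ‖x - s • v‖ ^ 2 = ‖v‖ ^ 2 * s ^ 2 - 2 * ⟪x, v⟫ * s + ‖x‖ ^ 2 := by
  rw [norm_sub_sq_real, norm_smul, inner_smul_right, Real.norm_eq_abs, mul_pow, sq_abs]
  ring

lemma exit_discriminant_pos {x v : F} (hx : ‖x‖ < 1) (hv : v ≠ 0) :
    0 < ⟪x, v⟫ ^ 2 + ‖v‖ ^ 2 * (1 - ‖x‖ ^ 2) :=
  add_pos_of_nonneg_of_pos (sq_nonneg _) (mul_pos (by positivity) (by nlinarith [norm_nonneg x]))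

end Quadratic

section ExitTime

variable {x v : E}

lemma tb_mul_norm_sq (hx : ‖x‖ < 1) (hv : v ≠ 0) :
    tb x v * ‖v‖ ^ 2 = ⟪x, v⟫ + √(⟪x, v⟫ ^ 2 + ‖v‖ ^ 2 * (1 - ‖x‖ ^ 2)) := by
  set a := ‖v‖ ^ 2
  set b := ⟪x, v⟫
  set w := √(b ^ 2 + a * (1 - ‖x‖ ^ 2))
  have ha : 0 < a := by positivity
  have hx2 : ‖x‖ ^ 2 < 1 := by nlinarith [norm_nonneg x]
  have hw2 : w ^ 2 = b ^ 2 + a * (1 - ‖x‖ ^ 2) := Real.sq_sqrt (exit_discriminant_pos hx hv).le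
  have hbw : |b| < w := by nlinarith [Real.sqrt_nonneg (b ^ 2 + a * (1 - ‖x‖ ^ 2)), sq_abs b]
  have hbw' := abs_lt.1 hbw
  suffices {s : ℝ | 0 ≤ s ∧ ‖x - s • v‖ ≤ 1} = Icc 0 ((b + w) / a) by
    rw [tb, this, csSup_Icc (div_nonneg (by linarith) ha.le), div_mul_cancel₀ _ ha.ne']
  ext s
  rw [mem_ofPred_eq, mem_Icc, le_div_iff₀ ha, ← sq_le_one_iff₀ (norm_nonneg _), norm_sub_smul_sq]
  refine and_congr_right fun hs => ⟨fun h => ?_, fun h => ?_⟩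
  · nlinarith [sq_nonneg (a * s - b)]
  · nlinarith [mul_nonneg (sub_nonneg.2 h) (by nlinarith : 0 ≤ s * a - b + w)]

lemma inner_xb (hx : ‖x‖ < 1) (hv : v ≠ 0) :
    ⟪v, xb x v⟫ = -√(⟪x, v⟫ ^ 2 + ‖v‖ ^ 2 * (1 - ‖x‖ ^ 2)) := by
  rw [xb, inner_sub_right, inner_smul_right, real_inner_self_eq_norm_sq, real_inner_comm]
  linarith [tb_mul_norm_sq hx hv]

lemma inner_xb_neg (hx : ‖x‖ < 1) (hv : v ≠ 0) : ⟪v, xb x v⟫ < 0 := by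
  rw [inner_xb hx hv, neg_lt_zero]
  exact Real.sqrt_pos.2 (exit_discriminant_pos hx hv)

lemma norm_xb (hx : ‖x‖ < 1) (hv : v ≠ 0) : ‖xb x v‖ = 1 := by
  have hT := tb_mul_norm_sq hx hv
  set w := √(⟪x, v⟫ ^ 2 + ‖v‖ ^ 2 * (1 - ‖x‖ ^ 2))
  have hw2 : w ^ 2 = ⟪x, v⟫ ^ 2 + ‖v‖ ^ 2 * (1 - ‖x‖ ^ 2) :=
    Real.sq_sqrt (exit_discriminant_pos hx hv).le
  have h : ‖v‖ ^ 2 * (‖xb x v‖ ^ 2 - 1) = 0 := by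
    rw [xb, norm_sub_smul_sq]
    linear_combination (tb x v * ‖v‖ ^ 2 - ⟪x, v⟫ + w) * hT + hw2
  have hv2 : ‖v‖ ^ 2 ≠ 0 := by positivity
  rw [mul_eq_zero, sub_eq_zero, pow_eq_one_iff_of_nonneg (norm_nonneg _) two_ne_zero] at h
  exact h.resolve_left hv2

lemma tb_eq (hx : ‖x‖ < 1) (hv : v ≠ 0) :
    tb x v = (⟪x, v⟫ + √(⟪x, v⟫ ^ 2 + ‖v‖ ^ 2 * (1 - ‖x‖ ^ 2))) / ‖v‖ ^ 2 :=
  eq_div_of_mul_eq (by positivity) (tb_mul_norm_sq hx hv)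

lemma eventually_norm_lt_one_and_ne_zero (hx : ‖x‖ < 1) (hv : v ≠ 0) :
    ∀ᶠ p in 𝓝 (x, v), ‖p.1‖ < 1 ∧ p.2 ≠ (0 : E) :=
  (continuousAt_fst.norm.eventually_lt continuousAt_const hx).and
    (continuousAt_snd.eventually_ne hv)

lemma differentiableAt_tb (hx : ‖x‖ < 1) (hv : v ≠ 0) :
    DifferentiableAt ℝ (fun p : E × E => tb p.1 p.2) (x, v) := by
  have hd := (exit_discriminant_pos hx hv).ne'
  have hv2 : ‖v‖ ^ 2 ≠ 0 := by positivity
  have hi : DifferentiableAt ℝ (fun p : E × E => ⟪p.1, p.2⟫) (x, v) :=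
    differentiableAt_fst.inner ℝ differentiableAt_snd
  have h1 : DifferentiableAt ℝ (fun p : E × E => ‖p.1‖ ^ 2) (x, v) := differentiableAt_fst.norm_sq ℝ
  have h2 : DifferentiableAt ℝ (fun p : E × E => ‖p.2‖ ^ 2) (x, v) := differentiableAt_snd.norm_sq ℝ
  have hformula : DifferentiableAt ℝ (fun p : E × E =>
      (⟪p.1, p.2⟫ + √(⟪p.1, p.2⟫ ^ 2 + ‖p.2‖ ^ 2 * (1 - ‖p.1‖ ^ 2))) / ‖p.2‖ ^ 2) (x, v) := by
    fun_prop (disch := assumption)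
  refine hformula.congr_of_eventuallyEq ?_
  filter_upwards [eventually_norm_lt_one_and_ne_zero hx hv] with p hp using tb_eq hp.1 hp.2

lemma hasFDerivAt_tb (hx : ‖x‖ < 1) (hv : v ≠ 0) :
    HasFDerivAt (fun p : E × E => tb p.1 p.2)
      (⟪v, xb x v⟫⁻¹ • (innerSL ℝ (xb x v)).comp (fst ℝ E E - tb x v • snd ℝ E E)) (x, v) := by
  set D := fderiv ℝ (fun p : E × E => tb p.1 p.2) (x, v)
  have hD : HasFDerivAt (fun p : E × E => tb p.1 p.2) D (x, v) :=
    (differentiableAt_tb hx hv).hasFDerivAt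
  have hxb : HasFDerivAt (fun p : E × E => xb p.1 p.2)
      (fst ℝ E E - (tb x v • snd ℝ E E + D.smulRight v)) (x, v) :=
    hasFDerivAt_fst.sub (hD.fun_smul hasFDerivAt_snd)
  have hsphere : (fun p : E × E => ‖xb p.1 p.2‖ ^ 2) =ᶠ[𝓝 (x, v)] fun _ => 1 := by
    filter_upwards [eventually_norm_lt_one_and_ne_zero hx hv] with p hp
    rw [norm_xb hp.1 hp.2, one_pow]
  have hzero := hxb.norm_sq.unique ((hasFDerivAt_const 1 (x, v)).congr_of_eventuallyEq hsphere)
  have hvn := (inner_xb_neg hx hv).ne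
  convert hD using 1
  refine ContinuousLinearMap.ext fun u => ?_
  have hu := congrArg (fun L => L u) hzero
  simp only [comp_sub, comp_add, comp_smulₛₗ, ringHom_apply, _root_.smul_apply, _root_.sub_apply,
    ContinuousLinearMap.comp_apply, coe_fst', coe_innerSL_apply, _root_.add_apply, coe_snd',
    smul_eq_mul, smulRight_apply, map_smul, nsmul_eq_mul, Nat.cast_ofNat, _root_.zero_apply,
    mul_eq_zero, OfNat.ofNat_ne_zero, false_or] at hu ⊢
  rw [real_inner_comm v (xb x v)] at hu
  field_simp
  linarith

lemma hasFDerivAt_xb (hx : ‖x‖ < 1) (hv : v ≠ 0) :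
    HasFDerivAt (fun p : E × E => xb p.1 p.2)
      ((toCLM (1 - (dot v (xb x v))⁻¹ • outer v (xb x v))).comp
        (fst ℝ E E - tb x v • snd ℝ E E)) (x, v) := by
  refine (hasFDerivAt_fst.sub ((hasFDerivAt_tb hx hv).fun_smul hasFDerivAt_snd)).congr_fderiv ?_
  refine ContinuousLinearMap.ext fun u => ?_
  rw [toCLM_eq_toEuclideanCLM, map_sub, map_one, map_smul, ← toCLM_eq_toEuclideanCLM]
  simp [toCLM_outer_apply, dot_eq_inner]
  module

end ExitTime

lemma hasFDerivAt_toCLM_Rmat_apply (n w : E) :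
    HasFDerivAt (fun q : E × E => toCLM (Rmat q.1) q.2)
      ((toCLM (Rmat n)).comp (snd ℝ E E) -
        (2 : ℝ) • (toCLM (dot w n • 1 + outer n w)).comp (fst ℝ E E)) (n, w) := by
  simp_rw [toCLM_Rmat_apply]
  refine (hasFDerivAt_snd.sub (((hasFDerivAt_fst.inner ℝ hasFDerivAt_snd).const_mul 2).fun_smul
    hasFDerivAt_fst)).congr_fderiv ?_
  refine ContinuousLinearMap.ext fun u => ?_
  rw [toCLM_eq_toEuclideanCLM, map_add, map_smul, map_one, ← toCLM_eq_toEuclideanCLM]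
  simp [toCLM_Rmat_apply, toCLM_outer_apply, dot_eq_inner, fderivInnerCLM_apply,
    real_inner_comm w]
  module

lemma hasFDerivAt_mulV_Rmat_xb {x v : E} (hx : ‖x‖ < 1) (hv : v ≠ 0) :
    HasFDerivAt (fun p : E × E => mulV (Rmat (xb p.1 p.2)) p.2)
      ((toCLM (Rmat (xb x v))).comp (snd ℝ E E) -
        (2 : ℝ) • (toCLM (Amat v (xb x v))).comp (fst ℝ E E - tb x v • snd ℝ E E)) (x, v) := by
  simp_rw [mulV_eq_toCLM]
  refine ((hasFDerivAt_toCLM_Rmat_apply (xb x v) v).comp (x, v)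
    ((hasFDerivAt_xb hx hv).prodMk hasFDerivAt_snd)).congr_fderiv ?_
  rw [Amat, toCLM_eq_toEuclideanCLM, map_mul, ← toCLM_eq_toEuclideanCLM]
  rfl

/-- Jacobians of the reflected velocity map v¹(x,v) = R_{x_b(x,v)} v. -/
theorem stmt17 (x v : E) (hx : ‖x‖ < 1) (hv : v ≠ 0) :
    dot v (xb x v) < 0 ∧
    DifferentiableAt ℝ (fun p : E × E => mulV (Rmat (xb p.1 p.2)) p.2) (x, v) ∧
    HasFDerivAt (fun y => mulV (Rmat (xb y v)) v)
      (toCLM ((-2 : ℝ) • Amat v (xb x v))) x ∧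
    HasFDerivAt (fun w => mulV (Rmat (xb x w)) w)
      (toCLM (Rmat (xb x v) + (2 * tb x v) • Amat v (xb x v))) v := by
  have hF := hasFDerivAt_mulV_Rmat_xb hx hv
  refine ⟨dot_eq_inner v _ ▸ inner_xb_neg hx hv, hF.differentiableAt, ?_, ?_⟩
  · have hFx := hF.comp x (hasFDerivAt_prodMk_left (𝕜 := ℝ) x v)
    refine hFx.congr_fderiv ?_
    refine ContinuousLinearMap.ext fun u => ?_
    rw [toCLM_eq_toEuclideanCLM, map_smul, ← toCLM_eq_toEuclideanCLM]
    simp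
  · have hFv := hF.comp v (hasFDerivAt_prodMk_right (𝕜 := ℝ) x v)
    refine hFv.congr_fderiv ?_
    refine ContinuousLinearMap.ext fun u => ?_
    rw [toCLM_eq_toEuclideanCLM, map_add, map_smul, ← toCLM_eq_toEuclideanCLM]
    simp [mul_smul]
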